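/- arXiv:1911.01984 — 3 statements merged into one kernel-verified Lean document; each statement's English description precedes it below -/
import Mathlib

section
/- Assume in addition the weak inf-sup condition: there exist constants C₀, C₁, C₂ > 0 such that for every z ∈ W there exists r₀ ∈ V with ‖r₀‖_V ≤ C₂·N(z) and b(z, r₀) ≥ C₀·N(z)² − C₁·q_c(z)^{1/2}·N(z). Then there exist constants β > 0 and C > 0, depending only on C₀, C₁, C₂, such that for every (p,z) ∈ V × W there exists (r,v) ∈ V × W with |(r,v)|_X ≤ C·|(p,z)|_X and B((p,z),(r,v)) ≥ β·|(p,z)|_X². In particular B satisfies the inf-sup condition inf_{(p,z)} sup_{(r,v)} B((p,z),(r,v)) / (|(p,z)|_X · |(r,v)|_X) ≥ β/C over pairs with nonzero seminorm. -/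
/-! The witness for `(p, z)` is `(S_V p + δ r₀, -S_W z)`, with `r₀` from the weak inf-sup
condition: by (i) and (iv) the flips turn `B` into `‖p‖² + q_c(z) + δ (a(p, r₀) + b(z, r₀))`,
and Young's inequality absorbs the negative terms of the weak inf-sup bound once `δ` is small.
Since `√q_c` is a seminorm (Cauchy–Schwarz for the nonnegative form `c(·, S_W ·)`), so is
`|·|_X`, and the contraction properties of the flips bound the witness in it.
For the inf-sup quotient the witness must have nonzero seminorm; if it has none, adding a large
multiple of it to `(p, z)` leaves the seminorm unchanged and makes `B` as large as needed. -/

section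

variable {E : Type*} [AddCommGroup E] [Module ℝ E]

theorem LinearMap.apply_add_apply_le_two_mul_sqrt (f : E →ₗ[ℝ] E →ₗ[ℝ] ℝ) (hf : ∀ x, 0 ≤ f x x)
    (x y : E) :
    f x y + f y x ≤ 2 * (√(f x x) * √(f y y)) := by
  have hquad : ∀ t : ℝ, 0 ≤ f y y * (t * t) + (f x y + f y x) * t + f x x := fun t => by
    have := hf (x + t • y)
    simp only [map_add, map_smul, LinearMap.add_apply, LinearMap.smul_apply, smul_eq_mul] at this
    linarith
  have hdisc := discrim_le_zero hquad
  refine le_of_sq_le_sq ?_ (by positivity)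
  rw [mul_pow, mul_pow, Real.sq_sqrt (hf x), Real.sq_sqrt (hf y)]
  rw [discrim] at hdisc
  linarith

namespace Seminorm

noncomputable def ofNonnegBilin (f : E →ₗ[ℝ] E →ₗ[ℝ] ℝ) (hf : ∀ x, 0 ≤ f x x) : Seminorm ℝ E :=
  Seminorm.of (fun x => √(f x x))
    (fun x y => by
      rw [Real.sqrt_le_left (by positivity), add_sq, Real.sq_sqrt (hf x), Real.sq_sqrt (hf y)]
      have := LinearMap.apply_add_apply_le_two_mul_sqrt f hf x y
      simp only [map_add, LinearMap.add_apply]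
      linarith)
    (fun t x => by
      simp only [map_smul, LinearMap.smul_apply, smul_eq_mul, ← mul_assoc, ← sq,
        Real.sqrt_mul (sq_nonneg t), Real.sqrt_sq_eq_abs, Real.norm_eq_abs])

theorem ofNonnegBilin_apply (f : E →ₗ[ℝ] E →ₗ[ℝ] ℝ) (hf : ∀ x, 0 ≤ f x x) (x : E) :
    ofNonnegBilin f hf x = √(f x x) := rfl

noncomputable def l2Sum (p q : Seminorm ℝ E) : Seminorm ℝ E :=
  Seminorm.of (fun x => √(p x ^ 2 + q x ^ 2))
    (fun x y => by
      rw [Real.sqrt_le_left (by positivity), add_sq, Real.sq_sqrt (by positivity),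
        Real.sq_sqrt (by positivity)]
      have hp := map_add_le_add p x y
      have hq := map_add_le_add q x y
      have hcs : p x * p y + q x * q y ≤ √(p x ^ 2 + q x ^ 2) * √(p y ^ 2 + q y ^ 2) := by
        rw [← Real.sqrt_mul (by positivity)]
        exact Real.le_sqrt_of_sq_le (by nlinarith [sq_nonneg (p x * q y - q x * p y)])
      nlinarith [apply_nonneg p (x + y), apply_nonneg q (x + y), apply_nonneg p x,
        apply_nonneg p y, apply_nonneg q x, apply_nonneg q y])
    (fun t x => by
      simp only [map_smul_eq_mul, mul_pow, ← mul_add, Real.sqrt_mul (sq_nonneg _),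
        Real.sqrt_sq (norm_nonneg t)])

theorem l2Sum_apply (p q : Seminorm ℝ E) (x : E) : l2Sum p q x = √(p x ^ 2 + q x ^ 2) := rfl

theorem exists_pos_inf_sup_witness (ρ : Seminorm ℝ E) (ℓ : E →ₗ[ℝ] ℝ) {x y : E} {β C : ℝ}
    (hβ : 0 < β) (hC : 0 < C) (hx : 0 < ρ x) (hy : ρ y ≤ C * ρ x) (hℓ : β * ρ x ^ 2 ≤ ℓ y) :
    ∃ y', 0 < ρ y' ∧ β / C * (ρ x * ρ y') ≤ ℓ y' := by
  rcases (apply_nonneg ρ y).lt_or_eq with hy₀ | hy₀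
  · refine ⟨y, hy₀, ?_⟩
    calc β / C * (ρ x * ρ y) ≤ β / C * (ρ x * (C * ρ x)) := by gcongr
      _ = β * ρ x ^ 2 := by field_simp
      _ ≤ ℓ y := hℓ
  · have hℓy : 0 < ℓ y := lt_of_lt_of_le (by positivity) hℓ
    set t := (β / C * ρ x ^ 2 - ℓ x) / ℓ y
    have hρ : ρ (x + t • y) = ρ x := by
      have hty : ρ (t • y) = 0 := by rw [map_smul_eq_mul, ← hy₀, mul_zero]
      refine le_antisymm ((map_add_le_add ρ _ _).trans (by rw [hty, add_zero])) ?_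
      calc ρ x = ρ (x + t • y - t • y) := by rw [add_sub_cancel_right]
        _ ≤ ρ (x + t • y) + ρ (t • y) := map_sub_le_add ρ _ _
        _ = ρ (x + t • y) := by rw [hty, add_zero]
    refine ⟨x + t • y, hρ ▸ hx, le_of_eq ?_⟩
    rw [hρ, map_add, map_smul, smul_eq_mul, div_mul_cancel₀ _ hℓy.ne']
    ring

end Seminorm

end

theorem young_coercivity_bound {C₀ C₁ C₂ δ : ℝ} (hδ : 0 ≤ δ) (hδC : δ * (C₁ ^ 2 + C₂ ^ 2) ≤ C₀)
    (P n s : ℝ) :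
    min (1 / 2) (δ * C₀ / 2) * (P ^ 2 + n ^ 2 + s ^ 2) ≤
      P ^ 2 + s ^ 2 + δ * (C₀ * n ^ 2 - C₁ * s * n - C₂ * P * n) := by
  have hs : δ * C₁ * s * n ≤ s ^ 2 / 2 + δ ^ 2 * C₁ ^ 2 * n ^ 2 / 2 := by
    nlinarith [sq_nonneg (s - δ * C₁ * n)]
  have hP : δ * C₂ * P * n ≤ P ^ 2 / 2 + δ ^ 2 * C₂ ^ 2 * n ^ 2 / 2 := by
    nlinarith [sq_nonneg (P - δ * C₂ * n)]
  have hn : δ ^ 2 * (C₁ ^ 2 + C₂ ^ 2) * n ^ 2 ≤ δ * C₀ * n ^ 2 := by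
    rw [sq δ, mul_assoc δ δ]
    gcongr
  calc min (1 / 2) (δ * C₀ / 2) * (P ^ 2 + n ^ 2 + s ^ 2)
      ≤ 1 / 2 * P ^ 2 + δ * C₀ / 2 * n ^ 2 + 1 / 2 * s ^ 2 := by
        rw [mul_add, mul_add]
        gcongr
        exacts [min_le_left _ _, min_le_right _ _, min_le_left _ _]
    _ ≤ P ^ 2 + s ^ 2 + δ * (C₀ * n ^ 2 - C₁ * s * n - C₂ * P * n) := by linarith

section HDG

variable {V W : Type*} [SeminormedAddCommGroup V] [NormedSpace ℝ V] [AddCommGroup W] [Module ℝ W]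

noncomputable def hdgSeminorm (N : Seminorm ℝ W) (c : W →ₗ[ℝ] W →ₗ[ℝ] ℝ) (SW : W →ₗ[ℝ] W)
    (hc0 : ∀ z, 0 ≤ c z (SW z)) : Seminorm ℝ (V × W) :=
  ((normSeminorm ℝ V).comp (LinearMap.fst ℝ V W)).l2Sum
    ((N.l2Sum (Seminorm.ofNonnegBilin (c.compl₂ SW) hc0)).comp (LinearMap.snd ℝ V W))

theorem hdgSeminorm_apply (N : Seminorm ℝ W) (c : W →ₗ[ℝ] W →ₗ[ℝ] ℝ) (SW : W →ₗ[ℝ] W)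
    (hc0 : ∀ z, 0 ≤ c z (SW z)) (r : V) (v : W) :
    hdgSeminorm N c SW hc0 (r, v) = √(‖r‖ ^ 2 + N v ^ 2 + c v (SW v)) := by
  change √(‖r‖ ^ 2 + √(N v ^ 2 + √(c v (SW v)) ^ 2) ^ 2) = _
  rw [Real.sq_sqrt (hc0 v), Real.sq_sqrt (by positivity [hc0 v]), add_assoc]

def hdgForm (a : V →ₗ[ℝ] V →ₗ[ℝ] ℝ) (b : W →ₗ[ℝ] V →ₗ[ℝ] ℝ) (c : W →ₗ[ℝ] W →ₗ[ℝ] ℝ)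
    (x : V × W) : V × W →ₗ[ℝ] ℝ :=
  (a x.1 + b x.2) ∘ₗ LinearMap.fst ℝ V W + (b.flip x.1 - c x.2) ∘ₗ LinearMap.snd ℝ V W

@[simp]
theorem hdgForm_apply (a : V →ₗ[ℝ] V →ₗ[ℝ] ℝ) (b : W →ₗ[ℝ] V →ₗ[ℝ] ℝ)
    (c : W →ₗ[ℝ] W →ₗ[ℝ] ℝ) (p r : V) (z v : W) :
    hdgForm a b c (p, z) (r, v) = a p r + b z r + b v p - c z v := by
  simp only [hdgForm, LinearMap.add_apply, LinearMap.comp_apply, LinearMap.fst_apply,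
    LinearMap.snd_apply, LinearMap.sub_apply, LinearMap.flip_apply]
  ring

variable (N : Seminorm ℝ W) (c : W →ₗ[ℝ] W →ₗ[ℝ] ℝ) (SW : W →ₗ[ℝ] W) (hc0 : ∀ z, 0 ≤ c z (SW z))

theorem hdgSeminorm_sq (p : V) (z : W) :
    hdgSeminorm N c SW hc0 (p, z) ^ 2 = ‖p‖ ^ 2 + N z ^ 2 + c z (SW z) := by
  rw [hdgSeminorm_apply, Real.sq_sqrt (by positivity [hc0 z])]

theorem hdgSeminorm_fst_zero (r : V) : hdgSeminorm N c SW hc0 (r, 0) = ‖r‖ := by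
  simp [hdgSeminorm_apply, Real.sqrt_sq]

theorem apply_snd_le_hdgSeminorm (p : V) (z : W) : N z ≤ hdgSeminorm N c SW hc0 (p, z) := by
  rw [hdgSeminorm_apply]
  exact Real.le_sqrt_of_sq_le (by linarith [sq_nonneg ‖p‖, hc0 z])

theorem hdgSeminorm_flip_le {SV : V →ₗ[ℝ] V} (hSV : ∀ r, ‖SV r‖ ≤ ‖r‖)
    (hc1 : ∀ z, c (SW z) (SW (SW z)) ≤ c z (SW z)) (hcN : ∀ z, N (SW z) ≤ N z) (p : V) (z : W) :
    hdgSeminorm N c SW hc0 (SV p, -SW z) ≤ hdgSeminorm N c SW hc0 (p, z) := by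
  simp only [hdgSeminorm_apply, map_neg_eq_map, map_neg, LinearMap.neg_apply, neg_neg]
  gcongr √(?_ ^ 2 + ?_ ^ 2 + ?_)
  exacts [hSV p, hcN z, hc1 z]

theorem hdgForm_flip_add_smul {a : V →ₗ[ℝ] V →ₗ[ℝ] ℝ} {b : W →ₗ[ℝ] V →ₗ[ℝ] ℝ}
    {SV : V →ₗ[ℝ] V} (ha1 : ∀ p, a p (SV p) = ‖p‖ ^ 2) (hb : ∀ z r, b z (SV r) = b (SW z) r)
    (p r₀ : V) (z : W) (δ : ℝ) :
    hdgForm a b c (p, z) ((SV p, -SW z) + δ • (r₀, 0)) =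
      ‖p‖ ^ 2 + c z (SW z) + δ * (a p r₀ + b z r₀) := by
  simp only [Prod.smul_mk, Prod.mk_add_mk, smul_zero, add_zero, hdgForm_apply, map_add,
    map_smul, map_neg, LinearMap.neg_apply, smul_eq_mul, ha1, hb]
  ring

variable {N c SW} {a : V →ₗ[ℝ] V →ₗ[ℝ] ℝ} {b : W →ₗ[ℝ] V →ₗ[ℝ] ℝ} {SV : V →ₗ[ℝ] V}

theorem exists_hdgSeminorm_le_and_le_hdgForm (ha1 : ∀ p, a p (SV p) = ‖p‖ ^ 2)
    (hSV : ∀ r, ‖SV r‖ ≤ ‖r‖) (ha3 : ∀ p r, |a p r| ≤ ‖p‖ * ‖r‖)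
    (hc1 : ∀ z, c (SW z) (SW (SW z)) ≤ c z (SW z)) (hcN : ∀ z, N (SW z) ≤ N z)
    (hb : ∀ z r, b z (SV r) = b (SW z) r) {C₀ C₁ C₂ δ : ℝ} (hC₂ : 0 ≤ C₂) (hδ : 0 ≤ δ)
    (hδC : δ * (C₁ ^ 2 + C₂ ^ 2) ≤ C₀)
    (hweak : ∀ z, ∃ r₀ : V, ‖r₀‖ ≤ C₂ * N z ∧
      C₀ * N z ^ 2 - C₁ * √(c z (SW z)) * N z ≤ b z r₀) (p : V) (z : W) :
    ∃ y : V × W, hdgSeminorm N c SW hc0 y ≤ (1 + δ * C₂) * hdgSeminorm N c SW hc0 (p, z) ∧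
      min (1 / 2) (δ * C₀ / 2) * hdgSeminorm N c SW hc0 (p, z) ^ 2 ≤ hdgForm a b c (p, z) y := by
  set ρ : Seminorm ℝ (V × W) := hdgSeminorm N c SW hc0
  obtain ⟨r₀, hr₀, hbr₀⟩ := hweak z
  refine ⟨(SV p, -SW z) + δ • (r₀, 0), ?_, ?_⟩
  · have hr₀ρ : ρ (δ • (r₀, 0)) ≤ δ * (C₂ * ρ (p, z)) := by
      rw [map_smul_eq_mul, Real.norm_of_nonneg hδ, hdgSeminorm_fst_zero]
      gcongr
      exact hr₀.trans (by gcongr; exact apply_snd_le_hdgSeminorm N c SW hc0 p z)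
    calc ρ ((SV p, -SW z) + δ • (r₀, 0)) ≤ ρ (SV p, -SW z) + ρ (δ • (r₀, 0)) :=
          map_add_le_add ρ _ _
      _ ≤ ρ (p, z) + δ * (C₂ * ρ (p, z)) :=
          add_le_add (hdgSeminorm_flip_le N c SW hc0 hSV hc1 hcN p z) hr₀ρ
      _ = (1 + δ * C₂) * ρ (p, z) := by ring
  · have har : -(C₂ * ‖p‖ * N z) ≤ a p r₀ := by
      have := mul_le_mul_of_nonneg_left hr₀ (norm_nonneg p)
      linarith [neg_abs_le (a p r₀), ha3 p r₀]
    have hq : c z (SW z) = √(c z (SW z)) ^ 2 := (Real.sq_sqrt (hc0 z)).symm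
    rw [hdgForm_flip_add_smul c SW ha1 hb, hdgSeminorm_sq, hq]
    calc _ ≤ ‖p‖ ^ 2 + √(c z (SW z)) ^ 2 + δ * (C₀ * N z ^ 2 - C₁ * √(c z (SW z)) * N z
            - C₂ * ‖p‖ * N z) := young_coercivity_bound hδ hδC _ _ _
      _ ≤ _ := by gcongr; linarith

end HDG

theorem hdg_inf_sup_of_weak_inf_sup_general
    (V W : Type*) [NormedAddCommGroup V] [InnerProductSpace ℝ V]
    [AddCommGroup W] [Module ℝ W] (N : Seminorm ℝ W)
    (a : V →ₗ[ℝ] V →ₗ[ℝ] ℝ) (b : W →ₗ[ℝ] V →ₗ[ℝ] ℝ) (c : W →ₗ[ℝ] W →ₗ[ℝ] ℝ)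
    (SV : V →ₗ[ℝ] V) (SW : W →ₗ[ℝ] W)
    (ha1 : ∀ p : V, a p (SV p) = ‖p‖ ^ 2)
    (ha2 : ∀ r : V, ‖SV r‖ ≤ ‖r‖)
    (ha3 : ∀ p r : V, |a p r| ≤ ‖p‖ * ‖r‖)
    (hc0 : ∀ z : W, 0 ≤ c z (SW z))
    (hc1 : ∀ z : W, c (SW z) (SW (SW z)) ≤ c z (SW z))
    (hcN : ∀ z : W, N (SW z) ≤ N z)
    (hb : ∀ (z : W) (r : V), b z (SV r) = b (SW z) r)
    -- the weak inf-sup condition with constants C₀, C₁, C₂ > 0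
    (C₀ C₁ C₂ : ℝ) (hC₀ : 0 < C₀) (hC₂ : 0 < C₂)
    (hweak : ∀ z : W, ∃ r₀ : V, ‖r₀‖ ≤ C₂ * N z ∧
      C₀ * (N z) ^ 2 - C₁ * Real.sqrt (c z (SW z)) * N z ≤ b z r₀) :
    ∃ β > (0 : ℝ), ∃ C > (0 : ℝ),
      (∀ (p : V) (z : W), ∃ (r : V) (v : W),
        Real.sqrt (‖r‖ ^ 2 + (N v) ^ 2 + c v (SW v))
          ≤ C * Real.sqrt (‖p‖ ^ 2 + (N z) ^ 2 + c z (SW z)) ∧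
        β * (‖p‖ ^ 2 + (N z) ^ 2 + c z (SW z))
          ≤ a p r + b z r + b v p - c z v) ∧
      (∀ (p : V) (z : W),
        0 < Real.sqrt (‖p‖ ^ 2 + (N z) ^ 2 + c z (SW z)) →
        ∃ (r : V) (v : W),
          0 < Real.sqrt (‖r‖ ^ 2 + (N v) ^ 2 + c v (SW v)) ∧
          (β / C) * (Real.sqrt (‖p‖ ^ 2 + (N z) ^ 2 + c z (SW z))
              * Real.sqrt (‖r‖ ^ 2 + (N v) ^ 2 + c v (SW v)))
            ≤ a p r + b z r + b v p - c z v) := by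
  set ρ : Seminorm ℝ (V × W) := hdgSeminorm N c SW hc0
  have hρ (r : V) (v : W) : √(‖r‖ ^ 2 + N v ^ 2 + c v (SW v)) = ρ (r, v) :=
    (hdgSeminorm_apply N c SW hc0 r v).symm
  have hρsq (p : V) (z : W) : ‖p‖ ^ 2 + N z ^ 2 + c z (SW z) = ρ (p, z) ^ 2 :=
    (hdgSeminorm_sq N c SW hc0 p z).symm
  set δ := C₀ / (C₁ ^ 2 + C₂ ^ 2 + 1)
  have hδ : 0 < δ := by positivity
  have hδC : δ * (C₁ ^ 2 + C₂ ^ 2) ≤ C₀ :=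
    calc δ * (C₁ ^ 2 + C₂ ^ 2) ≤ δ * (C₁ ^ 2 + C₂ ^ 2 + 1) :=
          mul_le_mul_of_nonneg_left (by linarith) hδ.le
      _ = C₀ := div_mul_cancel₀ _ (by positivity)
  have hwitness := exists_hdgSeminorm_le_and_le_hdgForm hc0 ha1 ha2 ha3 hc1 hcN hb hC₂.le hδ.le
    hδC hweak
  refine ⟨min (1 / 2) (δ * C₀ / 2), by positivity, 1 + δ * C₂, by positivity,
    fun p z => ?_, fun p z hpz => ?_⟩
  · obtain ⟨⟨r, v⟩, hle, hB⟩ := hwitness p z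
    exact ⟨r, v, by simpa only [hρ] using hle, by simpa only [hρsq, hdgForm_apply] using hB⟩
  · obtain ⟨y, hle, hB⟩ := hwitness p z
    rw [hρ] at hpz
    obtain ⟨⟨r, v⟩, hpos, hB'⟩ := Seminorm.exists_pos_inf_sup_witness ρ (hdgForm a b c (p, z))
      (by positivity) (by positivity) hpz hle hB
    exact ⟨r, v, by rwa [hρ], by simpa only [hρ, hdgForm_apply] using hB'⟩

/-- inf-sup condition from the weak inf-sup condition, abstract
HDG structure.  Let `V` be a real inner product space and `W` a real vector
space with a seminorm `N`.  Given bilinear forms `a`, `b`, `c` and sign-flip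
operators `SV`, `SW` satisfying the abstract HDG axioms, and assuming the weak
inf-sup condition with constants `C₀, C₁, C₂ > 0`, there exist `β > 0` and
`C > 0` such that for every `(p, z)` there is `(r, v)` with
`|(r,v)|_X ≤ C |(p,z)|_X` and `B((p,z),(r,v)) ≥ β |(p,z)|_X²`; in particular
`B` satisfies the inf-sup condition with constant `β / C` over pairs with
nonzero seminorm. -/
theorem hdg_inf_sup_of_weak_inf_sup
    (V W : Type*) [NormedAddCommGroup V] [InnerProductSpace ℝ V]
    [AddCommGroup W] [Module ℝ W] (N : Seminorm ℝ W)
    (a : V →ₗ[ℝ] V →ₗ[ℝ] ℝ) (b : W →ₗ[ℝ] V →ₗ[ℝ] ℝ) (c : W →ₗ[ℝ] W →ₗ[ℝ] ℝ)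
    (SV : V →ₗ[ℝ] V) (SW : W →ₗ[ℝ] W)
    (ha1 : ∀ p : V, a p (SV p) = ‖p‖ ^ 2)
    (ha2 : ∀ r : V, ‖SV r‖ ≤ ‖r‖)
    (ha3 : ∀ p r : V, |a p r| ≤ ‖p‖ * ‖r‖)
    (hc0 : ∀ z : W, 0 ≤ c z (SW z))
    (hc1 : ∀ z : W, c (SW z) (SW (SW z)) ≤ c z (SW z))
    (hcN : ∀ z : W, N (SW z) ≤ N z)
    (hb : ∀ (z : W) (r : V), b z (SV r) = b (SW z) r)
    -- the weak inf-sup condition with constants C₀, C₁, C₂ > 0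
    (C₀ C₁ C₂ : ℝ) (hC₀ : 0 < C₀) (hC₁ : 0 < C₁) (hC₂ : 0 < C₂)
    (hweak : ∀ z : W, ∃ r₀ : V, ‖r₀‖ ≤ C₂ * N z ∧
      C₀ * (N z) ^ 2 - C₁ * Real.sqrt (c z (SW z)) * N z ≤ b z r₀) :
    ∃ β > (0 : ℝ), ∃ C > (0 : ℝ),
      (∀ (p : V) (z : W), ∃ (r : V) (v : W),
        Real.sqrt (‖r‖ ^ 2 + (N v) ^ 2 + c v (SW v))
          ≤ C * Real.sqrt (‖p‖ ^ 2 + (N z) ^ 2 + c z (SW z)) ∧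
        β * (‖p‖ ^ 2 + (N z) ^ 2 + c z (SW z))
          ≤ a p r + b z r + b v p - c z v) ∧
      (∀ (p : V) (z : W),
        0 < Real.sqrt (‖p‖ ^ 2 + (N z) ^ 2 + c z (SW z)) →
        ∃ (r : V) (v : W),
          0 < Real.sqrt (‖r‖ ^ 2 + (N v) ^ 2 + c v (SW v)) ∧
          (β / C) * (Real.sqrt (‖p‖ ^ 2 + (N z) ^ 2 + c z (SW z))
              * Real.sqrt (‖r‖ ^ 2 + (N v) ^ 2 + c v (SW v)))
            ≤ a p r + b z r + b v p - c z v) :=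
  hdg_inf_sup_of_weak_inf_sup_general V W N a b c SV SW ha1 ha2 ha3 hc0 hc1 hcN hb C₀ C₁ C₂ hC₀ hC₂
    hweak
end

section
/- Let ∇u : ℝ² → ℝ² denote the piecewise pointwise gradient of u, i.e. ∇u(x₁,x₂) = (p₊'(x₁)·sin(π x₂), π·p₊(x₁)·cos(π x₂)) for x₁ < 0 and ∇u(x₁,x₂) = (p₋'(x₁)·sin(π x₂), π·p₋(x₁)·cos(π x₂)) for x₁ > 0. Then for every continuously differentiable function v : ℝ² → ℝ whose support is compact and contained in the open rectangle Ω = (−1,1) × (0,1), one has ∫_Ω σ(x)·∇u(x)·∇v(x) dx = −∫_Ω f(x)·v(x) dx. That is, u is a weak solution of ∇·(σ∇u) = f on Ω with homogeneous Dirichlet boundary conditions; in particular the exact solution of the cavity problem with sign-changing coefficient σ and source f is given by u. -/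
open MeasureTheory

/-! Cavity problem exact solution: `σ₊ > 0`, `σ₋ < 0`, `σ₊ + σ₋ ≠ 0`,
`Ω = (-1,1) × (0,1)`, `p₊(t) = (t+1)² - ((2σ₊+σ₋)/(σ₊+σ₋))(t+1)`,
`p₋(t) = (σ₊/(σ₊+σ₋))(t-1)`, `u(x₁,x₂) = p₊(x₁) sin(π x₂)` for `x₁ ≤ 0`,
`u(x₁,x₂) = p₋(x₁) sin(π x₂)` for `x₁ > 0`, coefficient `σ`, source `f`,
and the piecewise pointwise gradient `∇u`. -/

/-- The polynomial `p₊`. -/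
noncomputable def cavityPp (σp σm : ℝ) (t : ℝ) : ℝ :=
  (t + 1) ^ 2 - ((2 * σp + σm) / (σp + σm)) * (t + 1)

/-- The derivative `p₊'`. -/
noncomputable def cavityDPp (σp σm : ℝ) (t : ℝ) : ℝ :=
  2 * (t + 1) - (2 * σp + σm) / (σp + σm)

/-- The polynomial `p₋`. -/
noncomputable def cavityPm (σp σm : ℝ) (t : ℝ) : ℝ :=
  (σp / (σp + σm)) * (t - 1)

/-- The derivative `p₋'`. -/
noncomputable def cavityDPm (σp σm : ℝ) (_t : ℝ) : ℝ :=
  σp / (σp + σm)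

/-- The exact solution `u` of the cavity problem. -/
noncomputable def cavityU (σp σm : ℝ) (x : ℝ × ℝ) : ℝ :=
  if x.1 ≤ 0 then cavityPp σp σm x.1 * Real.sin (Real.pi * x.2)
  else cavityPm σp σm x.1 * Real.sin (Real.pi * x.2)

/-- The sign-changing coefficient `σ`. -/
noncomputable def cavitySigma (σp σm : ℝ) (x : ℝ × ℝ) : ℝ :=
  if x.1 < 0 then σp else σm

/-- The source term `f` of the cavity problem. -/
noncomputable def cavityF (σp σm : ℝ) (x : ℝ × ℝ) : ℝ :=
  if x.1 < 0 then σp * (2 - Real.pi ^ 2 * cavityPp σp σm x.1) * Real.sin (Real.pi * x.2)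
  else -σm * Real.pi ^ 2 * cavityPm σp σm x.1 * Real.sin (Real.pi * x.2)

/-- The piecewise pointwise gradient `∇u` of the exact solution. -/
noncomputable def cavityGradU (σp σm : ℝ) (x : ℝ × ℝ) : ℝ × ℝ :=
  if x.1 < 0 then
    (cavityDPp σp σm x.1 * Real.sin (Real.pi * x.2),
     Real.pi * cavityPp σp σm x.1 * Real.cos (Real.pi * x.2))
  else
    (cavityDPm σp σm x.1 * Real.sin (Real.pi * x.2),
     Real.pi * cavityPm σp σm x.1 * Real.cos (Real.pi * x.2))

section CavityAux

open MeasureTheory Set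

private lemma cavity_integrableOn_rect {F : ℝ × ℝ → ℝ} (hF : Continuous F) (a b c d : ℝ) :
    IntegrableOn F (Set.Ioo a b ×ˢ Set.Ioo c d) := by
  have := (hF.continuousOn.integrableOn_compact
    ((isCompact_Icc (a := a) (b := b)).prod (isCompact_Icc (a := c) (b := d))) (μ := volume))
  exact this.mono_set (Set.prod_mono Set.Ioo_subset_Icc_self Set.Ioo_subset_Icc_self)

private lemma cavity_int1d {g : ℝ → ℝ} (hg : Continuous g) (a b : ℝ) :
    Integrable g (volume.restrict (Set.Ioo a b)) :=
  (hg.continuousOn.integrableOn_compact isCompact_Icc).mono_set Set.Ioo_subset_Icc_self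

private lemma cavity_ioo_int (g : ℝ → ℝ) (a b : ℝ) (hab : a ≤ b) :
    ∫ x in Set.Ioo a b, g x = ∫ x in a..b, g x := by
  rw [intervalIntegral.integral_of_le hab, integral_Ioc_eq_integral_Ioo]

private lemma cavity_rect_symm (F : ℝ × ℝ → ℝ) (hF : Continuous F) (a b c d : ℝ) :
    ∫ x in Set.Ioo a b ×ˢ Set.Ioo c d, F x
      = ∫ y in Set.Ioo c d, ∫ x in Set.Ioo a b, F (x, y) := by
  rw [Measure.volume_eq_prod, ← Measure.prod_restrict]
  exact integral_prod_symm F (by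
    rw [Measure.prod_restrict]
    have := cavity_integrableOn_rect hF a b c d
    rwa [IntegrableOn, Measure.volume_eq_prod] at this)

private lemma cavity_rect_fub (F : ℝ × ℝ → ℝ) (hF : Continuous F) (a b c d : ℝ) :
    ∫ x in Set.Ioo a b ×ˢ Set.Ioo c d, F x
      = ∫ x in Set.Ioo a b, ∫ y in Set.Ioo c d, F (x, y) := by
  rw [Measure.volume_eq_prod, ← Measure.prod_restrict]
  exact integral_prod F (by
    rw [Measure.prod_restrict]
    have := cavity_integrableOn_rect hF a b c d
    rwa [IntegrableOn, Measure.volume_eq_prod] at this)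

private lemma cavity_int_int_symm (F : ℝ × ℝ → ℝ) (hF : Continuous F) (a b c d : ℝ) :
    Integrable (fun y => ∫ x in Set.Ioo a b, F (x, y)) (volume.restrict (Set.Ioo c d)) := by
  have h : Integrable F
      ((volume.restrict (Set.Ioo a b)).prod (volume.restrict (Set.Ioo c d))) := by
    rw [Measure.prod_restrict]
    have := cavity_integrableOn_rect hF a b c d
    rwa [IntegrableOn, Measure.volume_eq_prod] at this
  exact h.integral_prod_right

private lemma cavity_slice_x {v : ℝ × ℝ → ℝ} (hv : ContDiff ℝ 1 v) (y x : ℝ) :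
    HasDerivAt (fun t => v (t, y)) (fderiv ℝ v (x, y) (1, 0)) x := by
  have h := (hv.differentiable one_ne_zero (x, y)).hasFDerivAt
  have hL : HasDerivAt (fun t : ℝ => (t, y)) ((1 : ℝ), (0 : ℝ)) x :=
    (hasDerivAt_id x).prodMk (hasDerivAt_const x y)
  exact h.comp_hasDerivAt x hL

private lemma cavity_slice_y {v : ℝ × ℝ → ℝ} (hv : ContDiff ℝ 1 v) (x y : ℝ) :
    HasDerivAt (fun t => v (x, t)) (fderiv ℝ v (x, y) (0, 1)) y := by
  have h := (hv.differentiable one_ne_zero (x, y)).hasFDerivAt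
  have hL : HasDerivAt (fun t : ℝ => (x, t)) ((0 : ℝ), (1 : ℝ)) y :=
    (hasDerivAt_const y x).prodMk (hasDerivAt_id y)
  exact h.comp_hasDerivAt y hL

private lemma cavity_hcosd (c y : ℝ) :
    HasDerivAt (fun t => c * Real.cos (Real.pi * t))
      (-(c * Real.pi) * Real.sin (Real.pi * y)) y := by
  have h1 : HasDerivAt (fun t : ℝ => Real.pi * t) Real.pi y := by
    simpa using (hasDerivAt_id y).const_mul Real.pi
  have h2 := (Real.hasDerivAt_cos (Real.pi * y)).comp y h1
  have h3 : HasDerivAt (fun t => c * Real.cos (Real.pi * t))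
      (c * (-Real.sin (Real.pi * y) * Real.pi)) y := h2.const_mul c
  convert h3 using 1
  ring

private lemma cavity_rect_weak (s : ℝ) (p dp ddp : ℝ → ℝ)
    (hpc : Continuous p) (hdpc : Continuous dp) (hddpc : Continuous ddp)
    (hdp : ∀ t, HasDerivAt dp (ddp t) t)
    (a b : ℝ) (hab : a ≤ b)
    (v : ℝ × ℝ → ℝ) (hv : ContDiff ℝ 1 v)
    (hv0 : ∀ x, v (x, 0) = 0) (hv1 : ∀ x, v (x, 1) = 0) :
    ∫ x in Set.Ioo a b ×ˢ Set.Ioo (0 : ℝ) 1,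
        s * (dp x.1 * Real.sin (Real.pi * x.2) * fderiv ℝ v x (1, 0)
          + Real.pi * p x.1 * Real.cos (Real.pi * x.2) * fderiv ℝ v x (0, 1))
      = (∫ y in (0 : ℝ)..1, s * dp b * Real.sin (Real.pi * y) * v (b, y))
        - (∫ y in (0 : ℝ)..1, s * dp a * Real.sin (Real.pi * y) * v (a, y))
        - ∫ x in Set.Ioo a b ×ˢ Set.Ioo (0 : ℝ) 1,
            s * (ddp x.1 - Real.pi ^ 2 * p x.1) * Real.sin (Real.pi * x.2) * v x := by
  have hvc : Continuous v := hv.continuous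
  have hfd : Continuous (fderiv ℝ v) := hv.continuous_fderiv one_ne_zero
  have hD1 : Continuous fun x : ℝ × ℝ => fderiv ℝ v x (1, 0) := hfd.clm_apply continuous_const
  have hD2 : Continuous fun x : ℝ × ℝ => fderiv ℝ v x (0, 1) := hfd.clm_apply continuous_const
  have hsin : Continuous fun t : ℝ => Real.sin (Real.pi * t) :=
    Real.continuous_sin.comp (continuous_const.mul continuous_id)
  have hcos : Continuous fun t : ℝ => Real.cos (Real.pi * t) :=
    Real.continuous_cos.comp (continuous_const.mul continuous_id)
  set R := Set.Ioo a b ×ˢ Set.Ioo (0 : ℝ) 1 with hR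
  set F1 : ℝ × ℝ → ℝ := fun x => s * dp x.1 * Real.sin (Real.pi * x.2) * fderiv ℝ v x (1, 0)
    with hF1
  set F2 : ℝ × ℝ → ℝ := fun x => s * (Real.pi * p x.1) * Real.cos (Real.pi * x.2)
      * fderiv ℝ v x (0, 1) with hF2
  have hF1c : Continuous F1 := by
    apply Continuous.mul _ hD1
    exact (continuous_const.mul (hdpc.comp continuous_fst)).mul (hsin.comp continuous_snd)
  have hF2c : Continuous F2 := by
    apply Continuous.mul _ hD2
    exact (continuous_const.mul (continuous_const.mul (hpc.comp continuous_fst))).mul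
      (hcos.comp continuous_snd)
  set GA : ℝ × ℝ → ℝ := fun x => s * ddp x.1 * Real.sin (Real.pi * x.2) * v x with hGAdef
  set GB : ℝ × ℝ → ℝ := fun x => s * Real.pi ^ 2 * p x.1 * Real.sin (Real.pi * x.2) * v x
    with hGBdef
  have hGAc : Continuous GA := by
    apply Continuous.mul _ hvc
    exact (continuous_const.mul (hddpc.comp continuous_fst)).mul (hsin.comp continuous_snd)
  have hGBc : Continuous GB := by
    apply Continuous.mul _ hvc
    exact (continuous_const.mul (hpc.comp continuous_fst)).mul (hsin.comp continuous_snd)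
  have hsplit : ∫ x in R, s * (dp x.1 * Real.sin (Real.pi * x.2) * fderiv ℝ v x (1, 0)
          + Real.pi * p x.1 * Real.cos (Real.pi * x.2) * fderiv ℝ v x (0, 1))
      = (∫ x in R, F1 x) + ∫ x in R, F2 x := by
    rw [← integral_add (cavity_integrableOn_rect hF1c a b 0 1)
      (cavity_integrableOn_rect hF2c a b 0 1)]
    refine setIntegral_congr_fun (measurableSet_Ioo.prod measurableSet_Ioo) fun x _ => ?_
    simp only [hF1, hF2]; ring
  have hT1 : ∫ x in R, F1 x
      = (∫ y in (0 : ℝ)..1, s * dp b * Real.sin (Real.pi * y) * v (b, y))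
        - (∫ y in (0 : ℝ)..1, s * dp a * Real.sin (Real.pi * y) * v (a, y))
        - ∫ x in R, GA x := by
    rw [hR, cavity_rect_symm F1 hF1c, cavity_rect_symm GA hGAc]
    have hibp : ∀ y : ℝ, (∫ x in Set.Ioo a b, F1 (x, y))
        = s * dp b * Real.sin (Real.pi * y) * v (b, y)
          - s * dp a * Real.sin (Real.pi * y) * v (a, y)
          - ∫ x in Set.Ioo a b, GA (x, y) := by
      intro y
      rw [cavity_ioo_int _ a b hab, cavity_ioo_int _ a b hab]
      exact intervalIntegral.integral_mul_deriv_eq_deriv_mul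
        (u := fun x => s * dp x * Real.sin (Real.pi * y))
        (u' := fun x => s * ddp x * Real.sin (Real.pi * y))
        (v := fun x => v (x, y)) (v' := fun x => fderiv ℝ v (x, y) (1, 0))
        (fun x _ => ((hdp x).const_mul s).mul_const _)
        (fun x _ => cavity_slice_x hv y x)
        (((continuous_const.mul hddpc).mul continuous_const).intervalIntegrable a b)
        ((hD1.comp (Continuous.prodMk_left y)).intervalIntegrable a b)
    simp_rw [hibp]
    have hB : Integrable (fun y => s * dp b * Real.sin (Real.pi * y) * v (b, y))
        (volume.restrict (Set.Ioo (0 : ℝ) 1)) :=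
      cavity_int1d ((continuous_const.mul hsin).mul (hvc.comp (Continuous.prodMk_right b))) 0 1
    have hA : Integrable (fun y => s * dp a * Real.sin (Real.pi * y) * v (a, y))
        (volume.restrict (Set.Ioo (0 : ℝ) 1)) :=
      cavity_int1d ((continuous_const.mul hsin).mul (hvc.comp (Continuous.prodMk_right a))) 0 1
    have hC : Integrable (fun y => ∫ x in Set.Ioo a b, GA (x, y))
        (volume.restrict (Set.Ioo (0 : ℝ) 1)) := cavity_int_int_symm GA hGAc a b 0 1
    rw [← cavity_ioo_int (fun y => s * dp b * Real.sin (Real.pi * y) * v (b, y)) 0 1 zero_le_one,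
      ← cavity_ioo_int (fun y => s * dp a * Real.sin (Real.pi * y) * v (a, y)) 0 1 zero_le_one]
    have e1 := integral_sub (μ := volume.restrict (Set.Ioo (0 : ℝ) 1)) (hB.sub hA) hC
    simp only [Pi.sub_apply] at e1
    rw [integral_sub hB hA] at e1
    exact e1
  have hT2 : ∫ x in R, F2 x = ∫ x in R, GB x := by
    rw [hR, cavity_rect_fub F2 hF2c, cavity_rect_fub GB hGBc]
    refine setIntegral_congr_fun measurableSet_Ioo fun x _ => ?_
    rw [cavity_ioo_int _ 0 1 zero_le_one, cavity_ioo_int _ 0 1 zero_le_one]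
    have hibp := intervalIntegral.integral_mul_deriv_eq_deriv_mul
      (u := fun t => s * (Real.pi * p x) * Real.cos (Real.pi * t))
      (u' := fun t => -(s * (Real.pi * p x) * Real.pi) * Real.sin (Real.pi * t))
      (v := fun t => v (x, t)) (v' := fun t => fderiv ℝ v (x, t) (0, 1))
      (a := 0) (b := 1)
      (fun t _ => cavity_hcosd (s * (Real.pi * p x)) t)
      (fun t _ => cavity_slice_y hv x t)
      ((continuous_const.mul hsin).intervalIntegrable 0 1)
      ((hD2.comp (Continuous.prodMk_right x)).intervalIntegrable 0 1)
    rw [show (∫ t in (0:ℝ)..1, F2 (x, t)) = ∫ t in (0:ℝ)..1,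
        (fun t => s * (Real.pi * p x) * Real.cos (Real.pi * t)) t * fderiv ℝ v (x, t) (0, 1)
        from rfl, hibp]
    simp only [hv0, hv1, mul_zero, zero_sub, sub_zero, neg_zero, zero_add, hGBdef]
    rw [← intervalIntegral.integral_neg]
    exact intervalIntegral.integral_congr fun t _ => by ring
  rw [hsplit, hT1, hT2]
  have hfin : (∫ x in R, GA x) - ∫ x in R, GB x
      = ∫ x in R, s * (ddp x.1 - Real.pi ^ 2 * p x.1) * Real.sin (Real.pi * x.2) * v x := by
    rw [← integral_sub (cavity_integrableOn_rect hGAc a b 0 1)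
      (cavity_integrableOn_rect hGBc a b 0 1)]
    refine setIntegral_congr_fun (measurableSet_Ioo.prod measurableSet_Ioo) fun x _ => ?_
    simp only [hGAdef, hGBdef]; ring
  rw [← hfin]; ring

private lemma cavity_split (F Fp Fm : ℝ × ℝ → ℝ) (hFp : Continuous Fp) (hFm : Continuous Fm)
    (h1 : ∀ x : ℝ × ℝ, x.1 < 0 → F x = Fp x) (h2 : ∀ x : ℝ × ℝ, 0 ≤ x.1 → F x = Fm x) :
    ∫ x in Set.Ioo (-1 : ℝ) 1 ×ˢ Set.Ioo (0 : ℝ) 1, F x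
      = (∫ x in Set.Ioo (-1 : ℝ) 0 ×ˢ Set.Ioo (0 : ℝ) 1, Fp x)
        + ∫ x in Set.Ioo (0 : ℝ) 1 ×ˢ Set.Ioo (0 : ℝ) 1, Fm x := by
  have hU : Set.Ioo (-1 : ℝ) 1 = Set.Ioo (-1) 0 ∪ Set.Ico 0 1 :=
    (Set.Ioo_union_Ico_eq_Ioo (by norm_num) (by norm_num)).symm
  rw [hU, Set.union_prod]
  have hdisj : Disjoint (Set.Ioo (-1 : ℝ) 0 ×ˢ Set.Ioo (0 : ℝ) 1)
      (Set.Ico (0 : ℝ) 1 ×ˢ Set.Ioo (0 : ℝ) 1) := by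
    refine Set.disjoint_left.2 ?_
    rintro ⟨x1, x2⟩ hx hy
    exact absurd hx.1.2 (not_lt.2 hy.1.1)
  have hmI : MeasurableSet (Set.Ioo (-1 : ℝ) 0 ×ˢ Set.Ioo (0 : ℝ) 1) :=
    measurableSet_Ioo.prod measurableSet_Ioo
  have hmC : MeasurableSet (Set.Ico (0 : ℝ) 1 ×ˢ Set.Ioo (0 : ℝ) 1) :=
    measurableSet_Ico.prod measurableSet_Ioo
  have hiFm : IntegrableOn Fm (Set.Ico (0 : ℝ) 1 ×ˢ Set.Ioo (0 : ℝ) 1) :=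
    (hFm.continuousOn.integrableOn_compact (isCompact_Icc.prod isCompact_Icc)
      (μ := volume)).mono_set
      (Set.prod_mono Set.Ico_subset_Icc_self Set.Ioo_subset_Icc_self)
  have hi1 : IntegrableOn F (Set.Ioo (-1 : ℝ) 0 ×ˢ Set.Ioo (0 : ℝ) 1) :=
    (cavity_integrableOn_rect hFp (-1) 0 0 1).congr_fun (fun x hx => (h1 x hx.1.2).symm) hmI
  have hi2 : IntegrableOn F (Set.Ico (0 : ℝ) 1 ×ˢ Set.Ioo (0 : ℝ) 1) :=
    hiFm.congr_fun (fun x hx => (h2 x hx.1.1).symm) hmC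
  rw [setIntegral_union hdisj hmC hi1 hi2]
  congr 1
  · exact setIntegral_congr_fun hmI fun x hx => h1 x hx.1.2
  · rw [setIntegral_congr_fun hmC fun x hx => h2 x hx.1.1]
    refine setIntegral_congr_set ?_
    have h0 : volume (({(0 : ℝ)} : Set ℝ) ×ˢ Set.Ioo (0 : ℝ) 1) = 0 := by
      rw [Measure.volume_eq_prod, Measure.prod_prod]; simp
    rw [Filter.eventuallyEq_set, MeasureTheory.ae_iff]
    refine measure_mono_null ?_ h0
    rintro ⟨x1, x2⟩ hx
    simp only [Set.mem_setOf_eq, Set.mem_prod, Set.mem_Ico, Set.mem_Ioo,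
      Set.mem_singleton_iff] at hx ⊢
    rcases lt_trichotomy x1 0 with h | h | h
    · exact absurd (iff_of_false (fun hh => by linarith [hh.1.1])
        (fun hh => by linarith [hh.1.1])) hx
    · subst h
      refine ⟨rfl, ?_⟩
      by_contra hx2
      exact hx (iff_of_false (fun hh => hx2 hh.2) (fun hh => by linarith [hh.1.1]))
    · exact absurd ⟨fun hh => ⟨⟨h, hh.1.2⟩, hh.2⟩, fun hh => ⟨⟨h.le, hh.1.2⟩, hh.2⟩⟩ hx

end CavityAux

/-- `u` is a weak solution of `∇·(σ∇u) = f` on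
`Ω = (-1,1) × (0,1)` with homogeneous Dirichlet boundary conditions: for
every `C¹` function `v` with compact support contained in `Ω`,
`∫_Ω σ ∇u · ∇v = -∫_Ω f v`. -/

theorem cavity_solution_is_weak_solution
    (σp σm : ℝ) (hσp : 0 < σp) (hσm : σm < 0) (hsum : σp + σm ≠ 0) :
    ∀ v : ℝ × ℝ → ℝ, ContDiff ℝ 1 v → HasCompactSupport v →
      tsupport v ⊆ Set.Ioo (-1 : ℝ) 1 ×ˢ Set.Ioo (0 : ℝ) 1 →
      ∫ x in Set.Ioo (-1 : ℝ) 1 ×ˢ Set.Ioo (0 : ℝ) 1,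
          cavitySigma σp σm x *
            ((cavityGradU σp σm x).1 * fderiv ℝ v x (1, 0)
              + (cavityGradU σp σm x).2 * fderiv ℝ v x (0, 1))
        = -∫ x in Set.Ioo (-1 : ℝ) 1 ×ˢ Set.Ioo (0 : ℝ) 1,
            cavityF σp σm x * v x := by
  intro v hv hK hsupp
  have hvc : Continuous v := hv.continuous
  have hfd : Continuous (fderiv ℝ v) := hv.continuous_fderiv one_ne_zero
  have hD1 : Continuous fun x : ℝ × ℝ => fderiv ℝ v x (1, 0) := hfd.clm_apply continuous_const
  have hD2 : Continuous fun x : ℝ × ℝ => fderiv ℝ v x (0, 1) := hfd.clm_apply continuous_const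
  have hsin : Continuous fun t : ℝ => Real.sin (Real.pi * t) :=
    Real.continuous_sin.comp (continuous_const.mul continuous_id)
  have hcos : Continuous fun t : ℝ => Real.cos (Real.pi * t) :=
    Real.continuous_cos.comp (continuous_const.mul continuous_id)
  -- vanishing of v on the boundary lines
  have hva : ∀ y : ℝ, v (-1, y) = 0 := fun y =>
    image_eq_zero_of_notMem_tsupport (fun h => by simpa using ((hsupp h).1).1)
  have hvb : ∀ y : ℝ, v (1, y) = 0 := fun y =>
    image_eq_zero_of_notMem_tsupport (fun h => by simpa using ((hsupp h).1).2)
  have hv0 : ∀ x : ℝ, v (x, 0) = 0 := fun x =>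
    image_eq_zero_of_notMem_tsupport (fun h => by simpa using ((hsupp h).2).1)
  have hv1 : ∀ x : ℝ, v (x, 1) = 0 := fun x =>
    image_eq_zero_of_notMem_tsupport (fun h => by simpa using ((hsupp h).2).2)
  -- polynomial facts
  have hPpc : Continuous (cavityPp σp σm) := by unfold cavityPp; fun_prop
  have hDPpc : Continuous (cavityDPp σp σm) := by unfold cavityDPp; fun_prop
  have hPmc : Continuous (cavityPm σp σm) := by unfold cavityPm; fun_prop
  have hDPmc : Continuous (cavityDPm σp σm) := by unfold cavityDPm; fun_prop
  have hdPp : ∀ t, HasDerivAt (cavityPp σp σm) (cavityDPp σp σm t) t := by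
    intro t
    have h1 : HasDerivAt (fun t : ℝ => t + 1) 1 t := (hasDerivAt_id t).add_const 1
    have h2 := (h1.pow 2).sub (h1.const_mul ((2 * σp + σm) / (σp + σm)))
    unfold cavityPp cavityDPp
    exact h2.congr_deriv (by norm_num)
  have hdDPp : ∀ t, HasDerivAt (cavityDPp σp σm) ((fun _ : ℝ => (2 : ℝ)) t) t := by
    intro t
    have h1 : HasDerivAt (fun t : ℝ => t + 1) 1 t := (hasDerivAt_id t).add_const 1
    have h2 := (h1.const_mul 2).sub_const ((2 * σp + σm) / (σp + σm))
    unfold cavityDPp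
    exact h2.congr_deriv (by norm_num)
  have hdPm : ∀ t, HasDerivAt (cavityPm σp σm) (cavityDPm σp σm t) t := by
    intro t
    have h1 : HasDerivAt (fun t : ℝ => t - 1) 1 t := (hasDerivAt_id t).sub_const 1
    have h2 := h1.const_mul (σp / (σp + σm))
    unfold cavityPm cavityDPm
    exact h2.congr_deriv (by ring)
  have hdDPm : ∀ t, HasDerivAt (cavityDPm σp σm) ((fun _ : ℝ => (0 : ℝ)) t) t := fun t =>
    hasDerivAt_const t _
  -- continuous versions of the integrands on each half
  set Gp : ℝ × ℝ → ℝ := fun x =>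
    σp * (cavityDPp σp σm x.1 * Real.sin (Real.pi * x.2) * fderiv ℝ v x (1, 0)
      + Real.pi * cavityPp σp σm x.1 * Real.cos (Real.pi * x.2) * fderiv ℝ v x (0, 1))
    with hGp
  set Gm : ℝ × ℝ → ℝ := fun x =>
    σm * (cavityDPm σp σm x.1 * Real.sin (Real.pi * x.2) * fderiv ℝ v x (1, 0)
      + Real.pi * cavityPm σp σm x.1 * Real.cos (Real.pi * x.2) * fderiv ℝ v x (0, 1))
    with hGm
  set Fp : ℝ × ℝ → ℝ := fun x =>
    σp * (2 - Real.pi ^ 2 * cavityPp σp σm x.1) * Real.sin (Real.pi * x.2) * v x with hFp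
  set Fm : ℝ × ℝ → ℝ := fun x =>
    -σm * Real.pi ^ 2 * cavityPm σp σm x.1 * Real.sin (Real.pi * x.2) * v x with hFm
  have hGpc : Continuous Gp :=
    continuous_const.mul
      ((((hDPpc.comp continuous_fst).mul (hsin.comp continuous_snd)).mul hD1).add
        (((continuous_const.mul (hPpc.comp continuous_fst)).mul
          (hcos.comp continuous_snd)).mul hD2))
  have hGmc : Continuous Gm :=
    continuous_const.mul
      ((((hDPmc.comp continuous_fst).mul (hsin.comp continuous_snd)).mul hD1).add
        (((continuous_const.mul (hPmc.comp continuous_fst)).mul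
          (hcos.comp continuous_snd)).mul hD2))
  have hFpc : Continuous Fp :=
    ((continuous_const.mul
      ((continuous_const.sub (continuous_const.mul (hPpc.comp continuous_fst))))).mul
      (hsin.comp continuous_snd)).mul hvc
  have hFmc : Continuous Fm :=
    ((continuous_const.mul (hPmc.comp continuous_fst)).mul (hsin.comp continuous_snd)).mul hvc
  -- split the left-hand side
  have hLsplit := cavity_split
    (fun x => cavitySigma σp σm x *
      ((cavityGradU σp σm x).1 * fderiv ℝ v x (1, 0)
        + (cavityGradU σp σm x).2 * fderiv ℝ v x (0, 1))) Gp Gm hGpc hGmc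
    (fun x hx => by simp [cavitySigma, cavityGradU, if_pos hx, hGp])
    (fun x hx => by simp [cavitySigma, cavityGradU, if_neg (not_lt.2 hx), hGm])
  -- split the right-hand side
  have hRsplit := cavity_split (fun x => cavityF σp σm x * v x) Fp Fm hFpc hFmc
    (fun x hx => by simp only [cavityF, if_pos hx, hFp])
    (fun x hx => by simp only [cavityF, if_neg (not_lt.2 hx), hFm])
  -- integration by parts on each half
  have hL := cavity_rect_weak σp (cavityPp σp σm) (cavityDPp σp σm) (fun _ => (2 : ℝ))
    hPpc hDPpc continuous_const hdDPp (-1) 0 (by norm_num) v hv hv0 hv1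
  have hR := cavity_rect_weak σm (cavityPm σp σm) (cavityDPm σp σm) (fun _ => (0 : ℝ))
    hPmc hDPmc continuous_const hdDPm 0 1 (by norm_num) v hv hv0 hv1
  -- boundary terms at the outer walls vanish
  have hBa : (∫ y in (0 : ℝ)..1,
      σp * cavityDPp σp σm (-1) * Real.sin (Real.pi * y) * v (-1, y)) = 0 := by
    simp [hva]
  have hBb : (∫ y in (0 : ℝ)..1,
      σm * cavityDPm σp σm 1 * Real.sin (Real.pi * y) * v (1, y)) = 0 := by
    simp [hvb]
  -- the flux continuity at the interface
  have hflux : σp * cavityDPp σp σm 0 = σm * cavityDPm σp σm 0 := by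
    unfold cavityDPp cavityDPm
    field_simp
    ring
  have hB0 : (∫ y in (0 : ℝ)..1, σp * cavityDPp σp σm 0 * Real.sin (Real.pi * y) * v (0, y))
      = ∫ y in (0 : ℝ)..1, σm * cavityDPm σp σm 0 * Real.sin (Real.pi * y) * v (0, y) :=
    intervalIntegral.integral_congr fun y _ => by rw [hflux]
  -- identify the bulk terms with the source integrals
  have hfl : (∫ x in Set.Ioo (-1 : ℝ) 0 ×ˢ Set.Ioo (0 : ℝ) 1,
        σp * ((fun _ : ℝ => (2 : ℝ)) x.1 - Real.pi ^ 2 * cavityPp σp σm x.1)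
          * Real.sin (Real.pi * x.2) * v x)
      = ∫ x in Set.Ioo (-1 : ℝ) 0 ×ˢ Set.Ioo (0 : ℝ) 1, Fp x := by
    refine setIntegral_congr_fun (measurableSet_Ioo.prod measurableSet_Ioo) fun x _ => ?_
    simp only [hFp]
  have hfr : (∫ x in Set.Ioo (0 : ℝ) 1 ×ˢ Set.Ioo (0 : ℝ) 1,
        σm * ((fun _ : ℝ => (0 : ℝ)) x.1 - Real.pi ^ 2 * cavityPm σp σm x.1)
          * Real.sin (Real.pi * x.2) * v x)
      = ∫ x in Set.Ioo (0 : ℝ) 1 ×ˢ Set.Ioo (0 : ℝ) 1, Fm x := by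
    refine setIntegral_congr_fun (measurableSet_Ioo.prod measurableSet_Ioo) fun x _ => ?_
    simp only [hFm]
    ring
  rw [hLsplit, hRsplit, hL, hR, hBa, hBb, hfl, hfr, hB0]
  ring
end

section
/- Assume in addition the weak inf-sup condition: there exist constants C₀, C₁, C₂ > 0 such that for every z ∈ W there exists r₀ ∈ V with ‖r₀‖_V ≤ C₂·N(z) and b(z, r₀) ≥ C₀·N(z)² − C₁·q_c(z)^{1/2}·N(z). Then there exists a constant K > 0, depending only on C₀, C₁, C₂, with the following property: if δ ≥ 0, ℓ : V → ℝ is a linear functional with |ℓ(r)| ≤ δ·‖r‖_V for all r ∈ V, and (p,z) ∈ V × W satisfies B((p,z),(r,v)) = ℓ(r) for all (r,v) ∈ V × W, then |(p,z)|_X ≤ K·δ. (This is the abstract mechanism giving the optimal-order L²-error estimates ‖u − u_h‖ ≤ C h^s(‖q‖_{H^s} + ‖u‖_{H^s}) for the HDG method without an Aubin–Nitsche duality argument: the triple of errors (Π_V q − q_h, Π_W u − u_h, P_M ū − ū_h) satisfies the error equations with ℓ(r) = −(σ^{-1}(q − Π_V q), r) and δ = ‖q − Π_V q‖_{V_h}.)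 -/
/-!
Testing the equation with the sign-flipped pair `(S_V p, -S_W z)` gives the energy identity
`‖p‖² + q_c(z) = ℓ(S_V p) ≤ δ ‖p‖`, which controls `‖p‖` and `q_c(z)` by `δ`. Testing it with
`(r₀, 0)`, where `r₀` is the weak inf-sup test function of `z`, bounds `b(z, r₀)` by
`(δ + ‖p‖) ‖r₀‖ ≤ 2 C₂ δ N(z)`, and the inf-sup inequality then turns the control of `q_c(z)`
into `C₀ N(z)² ≤ (C₁ + 2 C₂) δ N(z)`.
-/

namespace AbstractHDG

theorem le_and_le_sq_of_sq_add_le_mul {x q δ : ℝ} (hδ : 0 ≤ δ) (hq : 0 ≤ q)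
    (h : x ^ 2 + q ≤ δ * x) : x ≤ δ ∧ q ≤ δ ^ 2 := by
  constructor <;> nlinarith [sq_nonneg (x - δ)]

theorem le_div_of_mul_sq_le_mul {C t A : ℝ} (hC : 0 < C) (hA : 0 ≤ A) (ht : 0 ≤ t)
    (h : C * t ^ 2 ≤ A * t) : t ≤ A / C := by
  rcases ht.eq_or_lt with rfl | ht
  · exact div_nonneg hA hC.le
  · rw [le_div_iff₀ hC]
    nlinarith

variable {V W : Type*} [SeminormedAddCommGroup V] [Module ℝ V] [AddCommGroup W] [Module ℝ W]
  {a : V →ₗ[ℝ] V →ₗ[ℝ] ℝ} {b : W →ₗ[ℝ] V →ₗ[ℝ] ℝ} {c : W →ₗ[ℝ] W →ₗ[ℝ] ℝ}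
  {ℓ : V →ₗ[ℝ] ℝ} {p : V} {z : W}

theorem norm_sq_add_stab_eq {SV : V →ₗ[ℝ] V} {SW : W →ₗ[ℝ] W}
    (ha1 : a p (SV p) = ‖p‖ ^ 2) (hb : b z (SV p) = b (SW z) p)
    (heq : ∀ r v, a p r + b z r + b v p - c z v = ℓ r) :
    ‖p‖ ^ 2 + c z (SW z) = ℓ (SV p) := by
  have h := heq (SV p) (-SW z)
  simp only [map_neg, LinearMap.neg_apply, ha1, hb] at h
  linarith

theorem norm_le_and_stab_le {SV : V →ₗ[ℝ] V} {SW : W →ₗ[ℝ] W} {δ : ℝ} (hδ : 0 ≤ δ)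
    (hℓ : ∀ r, |ℓ r| ≤ δ * ‖r‖) (ha2 : ‖SV p‖ ≤ ‖p‖) (hc0 : 0 ≤ c z (SW z))
    (henergy : ‖p‖ ^ 2 + c z (SW z) = ℓ (SV p)) :
    ‖p‖ ≤ δ ∧ c z (SW z) ≤ δ ^ 2 := by
  refine le_and_le_sq_of_sq_add_le_mul hδ hc0 ?_
  calc ‖p‖ ^ 2 + c z (SW z) = ℓ (SV p) := henergy
    _ ≤ δ * ‖SV p‖ := (le_abs_self _).trans (hℓ _)
    _ ≤ δ * ‖p‖ := by gcongr

theorem bilin_b_le_of_solution {δ : ℝ} (hℓ : ∀ r, |ℓ r| ≤ δ * ‖r‖)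
    (ha3 : ∀ r, |a p r| ≤ ‖p‖ * ‖r‖)
    (heq : ∀ r v, a p r + b z r + b v p - c z v = ℓ r) (r : V) :
    b z r ≤ (δ + ‖p‖) * ‖r‖ := by
  have h := heq r 0
  simp only [map_zero, LinearMap.zero_apply, sub_zero, add_zero] at h
  linarith [le_abs_self (ℓ r), hℓ r, neg_abs_le (a p r), ha3 r]

theorem seminorm_le_of_weak_inf_sup (N : Seminorm ℝ W) {q C₀ C₁ C₂ δ : ℝ} {r₀ : V}
    (hC₀ : 0 < C₀) (hC₁ : 0 ≤ C₁) (hC₂ : 0 ≤ C₂) (hδ : 0 ≤ δ) (hp : ‖p‖ ≤ δ) (hq : q ≤ δ ^ 2)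
    (hr₀ : ‖r₀‖ ≤ C₂ * N z) (hinfsup : C₀ * N z ^ 2 - C₁ * √q * N z ≤ b z r₀)
    (hb : b z r₀ ≤ (δ + ‖p‖) * ‖r₀‖) :
    N z ≤ (C₁ + 2 * C₂) / C₀ * δ := by
  have hsqrt : √q ≤ δ := Real.sqrt_le_iff.mpr ⟨hδ, hq⟩
  rw [div_mul_eq_mul_div]
  refine le_div_of_mul_sq_le_mul hC₀ (by positivity) (apply_nonneg N z) ?_
  calc C₀ * N z ^ 2 ≤ (δ + ‖p‖) * ‖r₀‖ + C₁ * √q * N z := by linarith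
    _ ≤ (2 * δ) * (C₂ * N z) + C₁ * δ * N z := by
        gcongr
        linarith
    _ = (C₁ + 2 * C₂) * δ * N z := by ring

end AbstractHDG

theorem hdg_error_estimate_without_duality_general
    (V W : Type*) [NormedAddCommGroup V] [InnerProductSpace ℝ V]
    [AddCommGroup W] [Module ℝ W] (N : Seminorm ℝ W)
    (a : V →ₗ[ℝ] V →ₗ[ℝ] ℝ) (b : W →ₗ[ℝ] V →ₗ[ℝ] ℝ) (c : W →ₗ[ℝ] W →ₗ[ℝ] ℝ)
    (SV : V →ₗ[ℝ] V) (SW : W →ₗ[ℝ] W)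
    (ha1 : ∀ p : V, a p (SV p) = ‖p‖ ^ 2)
    (ha2 : ∀ r : V, ‖SV r‖ ≤ ‖r‖)
    (ha3 : ∀ p r : V, |a p r| ≤ ‖p‖ * ‖r‖)
    (hc0 : ∀ z : W, 0 ≤ c z (SW z))
    (hb : ∀ (z : W) (r : V), b z (SV r) = b (SW z) r)
    -- the weak inf-sup condition with constants C₀, C₁, C₂ > 0
    (C₀ C₁ C₂ : ℝ) (hC₀ : 0 < C₀) (hC₁ : 0 < C₁) (hC₂ : 0 < C₂)
    (hweak : ∀ z : W, ∃ r₀ : V, ‖r₀‖ ≤ C₂ * N z ∧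
      C₀ * (N z) ^ 2 - C₁ * Real.sqrt (c z (SW z)) * N z ≤ b z r₀) :
    ∃ K > (0 : ℝ),
      ∀ (δ : ℝ), 0 ≤ δ → ∀ ℓ : V →ₗ[ℝ] ℝ, (∀ r : V, |ℓ r| ≤ δ * ‖r‖) →
        ∀ (p : V) (z : W),
          (∀ (r : V) (v : W), a p r + b z r + b v p - c z v = ℓ r) →
          Real.sqrt (‖p‖ ^ 2 + (N z) ^ 2 + c z (SW z)) ≤ K * δ := by
  set M := (C₁ + 2 * C₂) / C₀
  refine ⟨√(M ^ 2 + 2), Real.sqrt_pos.mpr (by positivity), ?_⟩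
  intro δ hδ ℓ hℓ p z heq
  obtain ⟨hp, hq⟩ := AbstractHDG.norm_le_and_stab_le hδ hℓ (ha2 p) (hc0 z)
    (AbstractHDG.norm_sq_add_stab_eq (ha1 p) (hb z p) heq)
  obtain ⟨r₀, hr₀, hinfsup⟩ := hweak z
  have hN : N z ≤ M * δ :=
    AbstractHDG.seminorm_le_of_weak_inf_sup N hC₀ hC₁.le hC₂.le hδ hp hq hr₀ hinfsup
      (AbstractHDG.bilin_b_le_of_solution hℓ (ha3 p) heq r₀)
  have hsum : ‖p‖ ^ 2 + N z ^ 2 + c z (SW z) ≤ (M ^ 2 + 2) * δ ^ 2 := by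
    have := pow_le_pow_left₀ (norm_nonneg p) hp 2
    have := pow_le_pow_left₀ (apply_nonneg N z) hN 2
    nlinarith
  calc √(‖p‖ ^ 2 + N z ^ 2 + c z (SW z)) ≤ √((M ^ 2 + 2) * δ ^ 2) := Real.sqrt_le_sqrt hsum
    _ = √(M ^ 2 + 2) * δ := by rw [Real.sqrt_mul (by positivity), Real.sqrt_sq hδ]

/-- abstract error estimate without a duality argument.
Under the abstract HDG axioms and the weak inf-sup condition with constants
`C₀, C₁, C₂ > 0`, there is `K > 0` (depending only on `C₀, C₁, C₂`) such that
any `(p, z)` solving `B((p,z),(r,v)) = ℓ(r)` for all `(r,v)`, with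
`|ℓ(r)| ≤ δ ‖r‖`, satisfies `|(p,z)|_X ≤ K δ`. -/
theorem hdg_error_estimate_without_duality
    (V W : Type*) [NormedAddCommGroup V] [InnerProductSpace ℝ V]
    [AddCommGroup W] [Module ℝ W] (N : Seminorm ℝ W)
    (a : V →ₗ[ℝ] V →ₗ[ℝ] ℝ) (b : W →ₗ[ℝ] V →ₗ[ℝ] ℝ) (c : W →ₗ[ℝ] W →ₗ[ℝ] ℝ)
    (SV : V →ₗ[ℝ] V) (SW : W →ₗ[ℝ] W)
    (ha1 : ∀ p : V, a p (SV p) = ‖p‖ ^ 2)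
    (ha2 : ∀ r : V, ‖SV r‖ ≤ ‖r‖)
    (ha3 : ∀ p r : V, |a p r| ≤ ‖p‖ * ‖r‖)
    (hc0 : ∀ z : W, 0 ≤ c z (SW z))
    (hc1 : ∀ z : W, c (SW z) (SW (SW z)) ≤ c z (SW z))
    (hcN : ∀ z : W, N (SW z) ≤ N z)
    (hb : ∀ (z : W) (r : V), b z (SV r) = b (SW z) r)
    -- the weak inf-sup condition with constants C₀, C₁, C₂ > 0
    (C₀ C₁ C₂ : ℝ) (hC₀ : 0 < C₀) (hC₁ : 0 < C₁) (hC₂ : 0 < C₂)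
    (hweak : ∀ z : W, ∃ r₀ : V, ‖r₀‖ ≤ C₂ * N z ∧
      C₀ * (N z) ^ 2 - C₁ * Real.sqrt (c z (SW z)) * N z ≤ b z r₀) :
    ∃ K > (0 : ℝ),
      ∀ (δ : ℝ), 0 ≤ δ → ∀ ℓ : V →ₗ[ℝ] ℝ, (∀ r : V, |ℓ r| ≤ δ * ‖r‖) →
        ∀ (p : V) (z : W),
          (∀ (r : V) (v : W), a p r + b z r + b v p - c z v = ℓ r) →
          Real.sqrt (‖p‖ ^ 2 + (N z) ^ 2 + c z (SW z)) ≤ K * δ :=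
  hdg_error_estimate_without_duality_general V W N a b c SV SW ha1 ha2 ha3 hc0 hb C₀ C₁ C₂ hC₀ hC₁
    hC₂ hweak
end
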